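/- arXiv:1603.05398 — 2 statements merged into one kernel-verified Lean document; each statement's English description precedes it below -/
import Mathlib

section
/- Let N ≥ 1, let α ∈ (0,1), and let T : ℝ^N → ℝ^N be an α-averaged operator with Fix T ≠ ∅. Let (γ_k)_{k≥0} be a real sequence with 0 ≤ γ_k ≤ (1−α)/α for all k. Then for any x₀ ∈ ℝ^N, the sequence defined by the alternated-inertia iterations x_{k+1} = T(x_k) when k is even and x_{k+1} = T(x_k + γ_k·(x_k − x_{k−1})) when k is odd, converges to a point of Fix T. -/
open Filter Topology

/-- `T` is an `α`-averaged operator on `ℝ^N` (Euclidean norm). -/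
def IsAveragedOp {N : ℕ} (α : ℝ)
    (T : EuclideanSpace ℝ (Fin N) → EuclideanSpace ℝ (Fin N)) : Prop :=
  ∀ x y : EuclideanSpace ℝ (Fin N),
    ‖T x - T y‖ ^ 2 + ((1 - α) / α) * ‖(x - T x) - (y - T y)‖ ^ 2 ≤ ‖x - y‖ ^ 2

/-!
Group the iterates in pairs: with `β = (1 - α)/α`, the even iterates satisfy
`x_{2j+2} = T y_j`, `y_j = T x_{2j} + c_j (T x_{2j} - x_{2j})`, `0 ≤ c_j ≤ β`. For a fixed point `w`,
averagedness applied at `x_{2j}` and at `y_j`, combined with the identity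
`‖p + c(p - q)‖² = (1 + c)‖p‖² - c‖q‖² + c(1 + c)‖p - q‖²`, gives
`‖x_{2j+2} - w‖² + β‖y_j - T y_j‖² ≤ ‖x_{2j} - w‖² - (1 + c_j)(β - c_j)‖x_{2j} - T x_{2j}‖²`.
So the even iterates are Fejér monotone with respect to `Fix T` and their residuals are square
summable; by compactness a subsequence converges, its limit is fixed by continuity of `T`, and
Fejér monotonicity upgrades this to convergence of the whole even subsequence. The odd iterates
`x_{2j+1} = T x_{2j}` follow by continuity.
-/

theorem norm_add_smul_sub_sq {E : Type*} [NormedAddCommGroup E] [InnerProductSpace ℝ E]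
    (p q : E) (c : ℝ) :
    ‖p + c • (p - q)‖ ^ 2 = (1 + c) * ‖p‖ ^ 2 - c * ‖q‖ ^ 2 + c * (1 + c) * ‖p - q‖ ^ 2 := by
  rw [norm_add_sq_real, norm_smul, mul_pow, Real.norm_eq_abs, sq_abs, real_inner_smul_right,
    inner_sub_right, real_inner_self_eq_norm_sq, norm_sub_sq_real]
  ring

theorem tendsto_of_tendsto_even_of_tendsto_odd {X : Type*} {u : ℕ → X} {l : Filter X}
    (h₀ : Tendsto (fun n => u (2 * n)) atTop l) (h₁ : Tendsto (fun n => u (2 * n + 1)) atTop l) :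
    Tendsto u atTop l := fun s hs =>
  Eventually.atTop_of_arithmetic two_ne_zero fun k hk => by
    interval_cases k
    exacts [h₀ hs, h₁ hs]

theorem tendsto_zero_of_le_sub_succ {d r : ℕ → ℝ} (hd : ∀ n, 0 ≤ d n) (hr : ∀ n, 0 ≤ r n)
    (h : ∀ n, r n ≤ d n - d (n + 1)) : Tendsto r atTop (𝓝 0) := by
  refine (summable_of_sum_range_le (c := d 0) hr fun n => ?_).tendsto_atTop_zero
  calc ∑ i ∈ Finset.range n, r i ≤ ∑ i ∈ Finset.range n, (d i - d (i + 1)) :=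
        Finset.sum_le_sum fun i _ => h i
    _ = d 0 - d n := Finset.sum_range_sub' d n
    _ ≤ d 0 := sub_le_self _ (hd n)

theorem exists_mem_tendsto_of_antitone_dist {X : Type*} [PseudoMetricSpace X] [ProperSpace X]
    {u : ℕ → X} {F : Set X} (hF : F.Nonempty) (hmono : ∀ w ∈ F, Antitone fun n => dist (u n) w)
    (hlim : ∀ a (φ : ℕ → ℕ), StrictMono φ → Tendsto (u ∘ φ) atTop (𝓝 a) → a ∈ F) :
    ∃ a ∈ F, Tendsto u atTop (𝓝 a) := by
  obtain ⟨z, hz⟩ := hF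
  have hball : ∀ n, u n ∈ Metric.closedBall z (dist (u 0) z) := fun n =>
    hmono z hz (Nat.zero_le n)
  obtain ⟨a, -, φ, hφ, hφa⟩ := (isCompact_closedBall z _).tendsto_subseq hball
  have ha := hlim a φ hφ hφa
  refine ⟨a, ha, ?_⟩
  rw [tendsto_iff_dist_tendsto_zero,
    tendsto_iff_tendsto_subseq_of_antitone (hmono a ha) hφ.tendsto_atTop]
  exact tendsto_iff_dist_tendsto_zero.1 hφa

namespace IsAveragedOp

variable {N : ℕ} {α : ℝ} {T : EuclideanSpace ℝ (Fin N) → EuclideanSpace ℝ (Fin N)}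

theorem norm_sub_sq_add_le_of_fixed (hT : IsAveragedOp α T) {w : EuclideanSpace ℝ (Fin N)}
    (hw : T w = w) (v : EuclideanSpace ℝ (Fin N)) :
    ‖T v - w‖ ^ 2 + (1 - α) / α * ‖v - T v‖ ^ 2 ≤ ‖v - w‖ ^ 2 := by
  simpa [hw] using hT v w

theorem lipschitzWith_one (hT : IsAveragedOp α T) (hα : α ∈ Set.Ioc 0 1) : LipschitzWith 1 T := by
  have hβ : 0 ≤ (1 - α) / α := div_nonneg (sub_nonneg.2 hα.2) hα.1.le
  refine LipschitzWith.of_dist_le_mul fun a b => ?_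
  rw [NNReal.coe_one, one_mul, dist_eq_norm, dist_eq_norm]
  refine (pow_le_pow_iff_left₀ (norm_nonneg _) (norm_nonneg _) two_ne_zero).1 ?_
  nlinarith [hT a b, sq_nonneg ‖(a - T a) - (b - T b)‖]

theorem norm_sub_sq_add_le_of_inertial (hT : IsAveragedOp α T) {w : EuclideanSpace ℝ (Fin N)}
    (hw : T w = w) {c : ℝ} (hc₀ : 0 ≤ c) (hc : c ≤ (1 - α) / α) (a : EuclideanSpace ℝ (Fin N)) :
    ‖T (T a + c • (T a - a)) - w‖ ^ 2
        + (1 - α) / α * ‖(T a + c • (T a - a)) - T (T a + c • (T a - a))‖ ^ 2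
      ≤ ‖a - w‖ ^ 2 := by
  set y := T a + c • (T a - a) with hy_def
  have hfirst := hT.norm_sub_sq_add_le_of_fixed hw a
  have hsecond := hT.norm_sub_sq_add_le_of_fixed hw y
  have hy : ‖y - w‖ ^ 2 =
      (1 + c) * ‖T a - w‖ ^ 2 - c * ‖a - w‖ ^ 2 + c * (1 + c) * ‖a - T a‖ ^ 2 := by
    have hyw : y - w = (T a - w) + c • ((T a - w) - (a - w)) := by
      rw [sub_sub_sub_cancel_right, hy_def]
      abel
    rw [hyw, norm_add_smul_sub_sq, sub_sub_sub_cancel_right, norm_sub_rev (T a) a]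
  have hgap : 0 ≤ (1 + c) * ((1 - α) / α - c) * ‖a - T a‖ ^ 2 := by
    have := sub_nonneg.2 hc
    positivity
  nlinarith [mul_le_mul_of_nonneg_left hfirst (by linarith : (0 : ℝ) ≤ 1 + c)]

theorem exists_tendsto_of_inertial (hT : IsAveragedOp α T) (hα : α ∈ Set.Ioo 0 1)
    (hfix : ∃ z, T z = z) (c : ℕ → ℝ) (hc : ∀ j, 0 ≤ c j ∧ c j ≤ (1 - α) / α)
    (e : ℕ → EuclideanSpace ℝ (Fin N))
    (he : ∀ j, e (j + 1) = T (T (e j) + c j • (T (e j) - e j))) :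
    ∃ xbar, T xbar = xbar ∧ Tendsto e atTop (𝓝 xbar) := by
  set β := (1 - α) / α
  have hβ : 0 < β := div_pos (sub_pos.2 hα.2) hα.1
  have hlip := hT.lipschitzWith_one (Set.Ioo_subset_Ioc_self hα)
  have hstep : ∀ w, T w = w → ∀ j,
      ‖e (j + 1) - w‖ ^ 2 + β * ‖e (j + 1) - T (e (j + 1))‖ ^ 2 ≤ ‖e j - w‖ ^ 2 := by
    intro w hw j
    have hnonexp : ‖e (j + 1) - T (e (j + 1))‖ ≤ ‖(T (e j) + c j • (T (e j) - e j)) - e (j + 1)‖ := by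
      rw [he j, ← dist_eq_norm, ← dist_eq_norm]
      simpa using hlip.dist_le_mul _ _
    have := hT.norm_sub_sq_add_le_of_inertial hw (hc j).1 (hc j).2 (e j)
    rw [← he j] at this
    nlinarith [pow_le_pow_left₀ (norm_nonneg _) hnonexp 2]
  have hmono : ∀ w, T w = w → Antitone fun j => dist (e j) w := fun w hw =>
    antitone_nat_of_succ_le fun j => by
      rw [dist_eq_norm, dist_eq_norm]
      refine (pow_le_pow_iff_left₀ (norm_nonneg _) (norm_nonneg _) two_ne_zero).1 ?_
      nlinarith [hstep w hw j, sq_nonneg ‖e (j + 1) - T (e (j + 1))‖]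
  obtain ⟨z, hz⟩ := hfix
  have hres : Tendsto (fun j => ‖e j - T (e j)‖ ^ 2) atTop (𝓝 0) := by
    rw [← tendsto_add_atTop_iff_nat 1]
    have := tendsto_zero_of_le_sub_succ (d := fun j => ‖e j - z‖ ^ 2)
      (r := fun j => β * ‖e (j + 1) - T (e (j + 1))‖ ^ 2) (fun _ => by positivity)
      (fun _ => by positivity) fun j => by linarith [hstep z hz j]
    simpa [inv_mul_cancel_left₀ hβ.ne'] using this.const_mul β⁻¹
  exact exists_mem_tendsto_of_antitone_dist (F := {w | T w = w}) ⟨z, hz⟩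
    hmono fun a φ hφ hφa => by
      have hφres : Tendsto (fun i => ‖e (φ i) - T (e (φ i))‖ ^ 2) atTop (𝓝 (‖a - T a‖ ^ 2)) :=
        ((hφa.sub ((hlip.continuous.tendsto a).comp hφa)).norm).pow 2
      have := tendsto_nhds_unique hφres (hres.comp hφ.tendsto_atTop)
      rw [sq_eq_zero_iff, norm_eq_zero, sub_eq_zero] at this
      exact this.symm

end IsAveragedOp

theorem stmt_4_general {N : ℕ} {α : ℝ} (hα : α ∈ Set.Ioo (0 : ℝ) 1)
    (T : EuclideanSpace ℝ (Fin N) → EuclideanSpace ℝ (Fin N))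
    (hT : IsAveragedOp α T) (hfix : ∃ z, T z = z)
    (γ : ℕ → ℝ) (hγ : ∀ k, 0 ≤ γ k ∧ γ k ≤ (1 - α) / α)
    (x : ℕ → EuclideanSpace ℝ (Fin N))
    (heven : ∀ k, Even k → x (k + 1) = T (x k))
    (hodd : ∀ k, ¬ Even k → x (k + 1) = T (x k + γ k • (x k - x (k - 1)))) :
    ∃ xbar, T xbar = xbar ∧ Tendsto x atTop (𝓝 xbar) := by
  have hfirst : ∀ j, x (2 * j + 1) = T (x (2 * j)) := fun j => heven _ (even_two_mul j)
  have hpair : ∀ j, x (2 * (j + 1)) =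
      T (T (x (2 * j)) + γ (2 * j + 1) • (T (x (2 * j)) - x (2 * j))) := fun j => by
    rw [show 2 * (j + 1) = 2 * j + 1 + 1 by ring, hodd _ (by simp [parity_simps]),
      Nat.add_sub_cancel, hfirst]
  obtain ⟨xbar, hxbar, hlim⟩ := hT.exists_tendsto_of_inertial hα hfix (fun j => γ (2 * j + 1))
    (fun j => hγ _) (fun j => x (2 * j)) hpair
  have hlim_odd : Tendsto (fun j => x (2 * j + 1)) atTop (𝓝 xbar) := by
    simpa only [Function.comp_def, hfirst, hxbar] using
      ((hT.lipschitzWith_one (Set.Ioo_subset_Ioc_self hα)).continuous.tendsto xbar).comp hlim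
  exact ⟨xbar, hxbar, tendsto_of_tendsto_even_of_tendsto_odd hlim hlim_odd⟩

/-- Alternated inertia: `x_{k+1} = T x_k` for even `k` and
`x_{k+1} = T(x_k + γ_k (x_k − x_{k−1}))` for odd `k`, with `0 ≤ γ_k ≤ (1−α)/α`,
converges to a fixed point. -/
theorem stmt_4 {N : ℕ} (hN : 1 ≤ N) {α : ℝ} (hα : α ∈ Set.Ioo (0 : ℝ) 1)
    (T : EuclideanSpace ℝ (Fin N) → EuclideanSpace ℝ (Fin N))
    (hT : IsAveragedOp α T) (hfix : ∃ z, T z = z)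
    (γ : ℕ → ℝ) (hγ : ∀ k, 0 ≤ γ k ∧ γ k ≤ (1 - α) / α)
    (x₀ : EuclideanSpace ℝ (Fin N)) (x : ℕ → EuclideanSpace ℝ (Fin N))
    (hx0 : x 0 = x₀)
    (heven : ∀ k, Even k → x (k + 1) = T (x k))
    (hodd : ∀ k, ¬ Even k → x (k + 1) = T (x k + γ k • (x k - x (k - 1)))) :
    ∃ xbar, T xbar = xbar ∧ Tendsto x atTop (𝓝 xbar) :=
  stmt_4_general hα T hT hfix γ hγ x heven hodd
end

section
/- Let N ≥ 1, let R be a complex N×N matrix, let γ ∈ ℝ, and let R^γ be the 2N×2N block matrix R^γ = [[(1+γ)·R, −γ·R], [I, 0]], where I is the N×N identity. Then a complex number μ is an eigenvalue of R^γ if and only if there exists an eigenvalue λ of R such that μ² − (1+γ)·λ·μ + γ·λ = 0. -/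
/-!
An eigenvector of `[[A, B], [I, 0]]` for `μ` necessarily has the shape `(μ v, v)` with `v ≠ 0`,
and then `(μ A + B) v = μ² v`. For `A = (1+γ) R` and `B = -γ R` the matrix `μ A + B` is the
scalar multiple `((1+γ) μ - γ) R`, whose spectrum is `((1+γ) μ - γ) • spectrum R` once the
spectrum of `R` is nonempty, i.e. `N ≥ 1`.
-/

open Matrix

theorem Sum.smul_elim {α β R M : Type*} [SMul R M] (c : R) (u : α → M) (v : β → M) :
    c • (u ⊕ᵥ v) = (c • u) ⊕ᵥ (c • v) := by
  ext (i | i) <;> rfl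

namespace Matrix

variable {n K : Type*} [Fintype n] [DecidableEq n] [Field K]

theorem mem_spectrum_iff_exists_mulVec_eq_smul {A : Matrix n n K} {μ : K} :
    μ ∈ spectrum K A ↔ ∃ v ≠ 0, A *ᵥ v = μ • v := by
  simp only [← spectrum_toLin', ← Module.End.hasEigenvalue_iff_mem_spectrum,
    Module.End.hasEigenvalue_iff, Submodule.ne_bot_iff, Module.End.mem_eigenspace_iff,
    toLin'_apply, and_comm]

theorem mem_spectrum_fromBlocks_one_zero_iff {A B : Matrix n n K} {μ : K} :
    μ ∈ spectrum K (fromBlocks A B (1 : Matrix n n K) 0) ↔ μ ^ 2 ∈ spectrum K (μ • A + B) := by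
  simp only [mem_spectrum_iff_exists_mulVec_eq_smul]
  constructor
  · rintro ⟨x, hx, he⟩
    obtain ⟨u, v, rfl⟩ : ∃ u v, x = u ⊕ᵥ v := ⟨_, _, (Sum.elim_comp_inl_inr x).symm⟩
    rw [fromBlocks_mulVec, Sum.elim_comp_inl, Sum.elim_comp_inr, Sum.smul_elim,
      Sum.elim_eq_iff, one_mulVec, zero_mulVec, add_zero] at he
    obtain ⟨hAB, rfl⟩ := he
    refine ⟨v, fun hv ↦ hx (by simp [hv]), ?_⟩
    rw [add_mulVec, smul_mulVec, ← mulVec_smul, hAB, pow_two, mul_smul]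
  · rintro ⟨v, hv, he⟩
    refine ⟨(μ • v) ⊕ᵥ v, fun h ↦ hv (by simpa using congrArg (· ∘ Sum.inr) h), ?_⟩
    rw [fromBlocks_mulVec, Sum.elim_comp_inl, Sum.elim_comp_inr, Sum.smul_elim, one_mulVec,
      zero_mulVec, add_zero, mulVec_smul, ← smul_mulVec, ← add_mulVec, he, pow_two, mul_smul]

theorem mem_spectrum_fromBlocks_smul_iff [Nonempty n] [IsAlgClosed K] {R : Matrix n n K}
    {a b μ : K} :
    μ ∈ spectrum K (fromBlocks (a • R) (b • R) (1 : Matrix n n K) 0) ↔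
      ∃ lam ∈ spectrum K R, (a * μ + b) * lam = μ ^ 2 := by
  have hR : (spectrum K R).Nonempty := spectrum.nonempty_of_isAlgClosed_of_finiteDimensional K R
  have hcomb : μ • a • R + b • R = (a * μ + b) • R := by module
  rw [mem_spectrum_fromBlocks_one_zero_iff, hcomb, spectrum.smul_eq_smul _ _ hR,
    Set.mem_smul_set]
  simp only [smul_eq_mul]

end Matrix

/-- The spectrum of the inertial block matrix `R^γ = [[(1+γ)R, −γR], [I, 0]]`: `μ` is an
eigenvalue of `R^γ` iff `μ² − (1+γ)λμ + γλ = 0` for some eigenvalue `λ` of `R`. -/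
theorem stmt_10 {N : ℕ} (hN : 1 ≤ N) (R : Matrix (Fin N) (Fin N) ℂ) (γ : ℝ)
    (Rγ : Matrix (Fin N ⊕ Fin N) (Fin N ⊕ Fin N) ℂ)
    (hRγ : Rγ = Matrix.fromBlocks ((1 + (γ : ℂ)) • R) ((-(γ : ℂ)) • R) 1 0)
    (μ : ℂ) :
    μ ∈ spectrum ℂ Rγ ↔
      ∃ lam ∈ spectrum ℂ R, μ ^ 2 - (1 + (γ : ℂ)) * lam * μ + (γ : ℂ) * lam = 0 := by
  have : Nonempty (Fin N) := ⟨⟨0, hN⟩⟩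
  rw [hRγ, Matrix.mem_spectrum_fromBlocks_smul_iff]
  refine exists_congr fun lam ↦ and_congr_right fun _ ↦ ⟨fun h ↦ ?_, fun h ↦ ?_⟩ <;>
    linear_combination -h
end
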